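/- arXiv:1410.6831 — 3 statements merged into one kernel-verified Lean document; each statement's English description precedes it below -/
import Mathlib

section
/- If s̄ > b/2 with b > 0, then the unique maximizer over a ≥ 0 of a ↦ -(s̄ - a)^2 - b·e^a is a* = s̄ - W(b·e^{s̄}/2), where W is the principal Lambert W function; moreover a* > 0. -/
open Real

/-! With `w = W((b/2)·e^{s̄})` the defining equation `w·e^w = (b/2)·e^{s̄}` reads
`b·e^{s̄ - w} = 2w`, the first-order condition at `a* = s̄ - w`. Writing `a = a* + d`, this gives
`g(a*) - g(a) = d² + 2w(e^d - 1 - d) ≥ d²`, so `a*` is the strict global maximizer.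
Positivity of `a*` follows from `w·e^w = (b/2)·e^{s̄} < s̄·e^{s̄}` and monotonicity of `x ↦ x·e^x`
on `[0, ∞)`. -/

theorem lt_of_mul_exp_lt_mul_exp {x y : ℝ} (hy : 0 ≤ y) (h : x * exp x < y * exp y) : x < y := by
  by_contra! hyx
  exact h.not_ge <| mul_le_mul hyx (exp_le_exp.2 hyx) (exp_nonneg y) (hy.trans hyx)

theorem neg_sq_sub_exp_add_sq_le {b s w : ℝ} (hw : 0 ≤ w) (hcrit : b * exp (s - w) = 2 * w)
    (a : ℝ) :
    -(s - a) ^ 2 - b * exp a + (a - (s - w)) ^ 2 ≤ -(s - (s - w)) ^ 2 - b * exp (s - w) := by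
  set d := a - (s - w) with hd
  have hexp : exp a = exp (s - w) * exp d := by rw [← exp_add, hd, add_sub_cancel]
  have hgap : -(s - (s - w)) ^ 2 - b * exp (s - w) - (-(s - a) ^ 2 - b * exp a + d ^ 2)
      = 2 * w * (exp d - 1 - d) := by
    rw [hexp]; linear_combination (exp d - 1) * hcrit
  have : 0 ≤ 2 * w * (exp d - 1 - d) :=
    mul_nonneg (by positivity) (by linarith [add_one_le_exp d])
  linarith

/-- If `s̄ > b/2` with `b > 0`, the unique maximizer on `[0,∞)` of
`a ↦ -(s̄ - a)^2 - b·exp a` is `a* = s̄ - W((b/2)·exp s̄)`, where `W` is the principal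
Lambert W function, and moreover `a* > 0`. -/
theorem stmt_2 (b sbar : ℝ) (hb : 0 < b) (hs : sbar > b / 2)
    (W : ℝ → ℝ) (hW : ∀ y : ℝ, 0 ≤ y → 0 ≤ W y ∧ W y * Real.exp (W y) = y) :
    0 < sbar - W (b / 2 * Real.exp sbar) ∧
    (∀ a : ℝ, 0 ≤ a →
      -(sbar - a) ^ 2 - b * Real.exp a
        ≤ -(sbar - (sbar - W (b / 2 * Real.exp sbar))) ^ 2
            - b * Real.exp (sbar - W (b / 2 * Real.exp sbar))) ∧
    (∀ a : ℝ, 0 ≤ a →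
      -(sbar - a) ^ 2 - b * Real.exp a
        = -(sbar - (sbar - W (b / 2 * Real.exp sbar))) ^ 2
            - b * Real.exp (sbar - W (b / 2 * Real.exp sbar)) →
      a = sbar - W (b / 2 * Real.exp sbar)) := by
  have hy : 0 ≤ b / 2 * exp sbar := by positivity
  obtain ⟨hw0, hwe⟩ := hW _ hy
  set w := W (b / 2 * exp sbar)
  have hcrit : b * exp (sbar - w) = 2 * w := by
    rw [exp_sub]; field_simp; linarith
  have hws : w < sbar := by
    refine lt_of_mul_exp_lt_mul_exp (by linarith) ?_
    rw [hwe]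
    exact mul_lt_mul_of_pos_right hs (exp_pos sbar)
  have hgap := neg_sq_sub_exp_add_sq_le hw0 hcrit
  refine ⟨sub_pos.2 hws, fun a _ => by linarith [hgap a, sq_nonneg (a - (sbar - w))], ?_⟩
  intro a _ heq
  have hsq : (a - (sbar - w)) ^ 2 = 0 := by linarith [hgap a, sq_nonneg (a - (sbar - w))]
  exact sub_eq_zero.1 (pow_eq_zero_iff two_ne_zero |>.1 hsq)
end

section
/- For b > 0, any sequence satisfying the equilibrium recursion with 0 = s_0 < s_1 satisfies s_{m+1} − s_m > s_m − s_{m-1} + 2b for all m ≥ 1; in particular consecutive interval lengths are strictly increasing. -/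
/-!
Writing `φ_b(x) = 2x + b eˣ`, the two critical-point equations `φ_b(a_{m-1}) = s_{m-1} + s_m`,
`φ_b(a_m) = s_m + s_{m+1}` together with the arbitrage condition `2 s_m = a_{m-1} + a_m` give the
exact second difference `s_{m+1} - 2 s_m + s_{m-1} = b (e^{a_{m-1}} + e^{a_m})`.
Since `φ_b` is strictly increasing and `s` is, the actions increase, so
`e^{a_m} > e^{a_{m-1}} ≥ 1`.
-/

open Real

noncomputable def phi (b x : ℝ) : ℝ := 2 * x + b * exp x

lemma phi_strictMono {b : ℝ} (hb : 0 ≤ b) : StrictMono (phi b) := fun x y hxy => by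
  have : b * exp x ≤ b * exp y := mul_le_mul_of_nonneg_left (exp_le_exp.2 hxy.le) hb
  unfold phi
  linarith

lemma sub_sub_sub_eq_of_phi {b x y s₀ s₁ s₂ : ℝ} (hx : phi b x = s₀ + s₁)
    (hy : phi b y = s₁ + s₂) (hs : s₁ = (x + y) / 2) :
    s₂ - s₁ - (s₁ - s₀) = b * (exp x + exp y) := by
  unfold phi at hx hy
  linarith

theorem stmt_9_general (b : ℝ) (hb : 0 < b) (s a : ℕ → ℝ)
    (hmono : StrictMono s)
    (ha : ∀ m : ℕ, 2 * a m + b * Real.exp (a m) = s m + s (m + 1))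
    (hanneg : ∀ m : ℕ, 0 ≤ a m)
    (harb : ∀ m : ℕ, 1 ≤ m → s m = (a (m - 1) + a m) / 2) :
    ∀ m : ℕ, 1 ≤ m →
      (s (m + 1) - s m ≥ s m - s (m - 1) + 2 * b * Real.exp (a (m - 1))) ∧
      (s (m + 1) - s m > s m - s (m - 1)) ∧
      (s (m + 1) - s m > s m - s (m - 1) + 2 * b) := by
  intro m hm
  obtain ⟨k, rfl⟩ : ∃ k, m = k + 1 := ⟨m - 1, by omega⟩
  simp only [Nat.add_sub_cancel]
  have hdiff : s (k + 2) - s (k + 1) - (s (k + 1) - s k) = b * (exp (a k) + exp (a (k + 1))) :=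
    sub_sub_sub_eq_of_phi (ha k) (ha (k + 1)) (harb (k + 1) hm)
  have hact : a k < a (k + 1) := by
    refine (phi_strictMono hb.le).lt_iff_lt.1 ?_
    rw [phi, phi, ha k, ha (k + 1)]
    linarith [hmono (show k < k + 2 by omega)]
  have hgrow : b * exp (a k) < b * exp (a (k + 1)) := mul_lt_mul_of_pos_left (exp_lt_exp.2 hact) hb
  have hbase : b ≤ b * exp (a k) := le_mul_of_one_le_right hb.le (one_le_exp (hanneg k))
  refine ⟨?_, ?_, ?_⟩ <;> linarith

/-- For `b > 0`, along any equilibrium sequence (arbitrage condition plus aggregator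
critical points, with nonnegative actions) the interval lengths grow by more
than `2b` at each step. -/
theorem stmt_9 (b : ℝ) (hb : 0 < b) (s a : ℕ → ℝ)
    (hmono : StrictMono s) (hs0 : s 0 = 0) (hs1 : 0 < s 1)
    (ha : ∀ m : ℕ, 2 * a m + b * Real.exp (a m) = s m + s (m + 1))
    (hanneg : ∀ m : ℕ, 0 ≤ a m)
    (harb : ∀ m : ℕ, 1 ≤ m → s m = (a (m - 1) + a m) / 2) :
    ∀ m : ℕ, 1 ≤ m →
      (s (m + 1) - s m ≥ s m - s (m - 1) + 2 * b * Real.exp (a (m - 1))) ∧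
      (s (m + 1) - s m > s m - s (m - 1)) ∧
      (s (m + 1) - s m > s m - s (m - 1) + 2 * b) :=
  stmt_9_general b hb s a hmono ha hanneg harb
end

section
/- For each b > 0 and each L ≥ 1 such that an equilibrium partition with L intervals exists, the boundary points are uniquely determined by the two-point boundary problem: s_0 = 0, s_L = 1, and the recursion s_{m+1} = φ_b(2s_m − φ_b^{-1}(s_{m-1}+s_m)) − s_m; uniqueness follows from strict monotonicity of the map s_1 ↦ s_L(s_1). -/
/-!
Compare two solutions `u`, `v` of the recursion and write `δₘ = vₘ - uₘ`. Since
`φ_b x = 2x + b eˣ` is increasing with `φ_b y - φ_b x ≥ 2 (y - x)` for `x ≤ y`, the relation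
`φ_b(aₘ) = sₘ₋₁ + sₘ` gives `0 ≤ Δaₘ ≤ (δₘ₋₁ + δₘ)/2`; hence the argument `2sₘ - aₘ` of the next
step moves by at least `δₘ`, and `δₘ₊₁ ≥ 2(2δₘ - Δaₘ) - δₘ ≥ δₘ` as soon as `0 ≤ δₘ₋₁ ≤ δₘ`.
So the gaps never shrink, and `s_L(t₂) - s_L(t₁) ≥ t₂ - t₁ > 0`.
-/

open Real

noncomputable def equilibriumMap (b x : ℝ) : ℝ := 2 * x + b * exp x

/-- `a m` stands for the paper's `φ_b⁻¹(s (m-1) + s m)`. -/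
def IsEquilibriumSeq (b : ℝ) (L : ℕ) (s a : ℕ → ℝ) : Prop :=
  ∀ m, 1 ≤ m → m < L →
    equilibriumMap b (a m) = s (m - 1) + s m ∧
    s (m + 1) = equilibriumMap b (2 * s m - a m) - s m

section

variable {b : ℝ}

lemma two_mul_sub_le_equilibriumMap_sub (hb : 0 ≤ b) {x y : ℝ} (hxy : x ≤ y) :
    2 * (y - x) ≤ equilibriumMap b y - equilibriumMap b x := by
  have : b * exp x ≤ b * exp y := mul_le_mul_of_nonneg_left (exp_le_exp.mpr hxy) hb
  unfold equilibriumMap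
  linarith

lemma equilibriumMap_strictMono (hb : 0 ≤ b) : StrictMono (equilibriumMap b) := fun x y hxy => by
  have := two_mul_sub_le_equilibriumMap_sub hb hxy.le
  linarith

lemma sub_le_sub_equilibriumStep (hb : 0 ≤ b) {u₀ u₁ v₀ v₁ α β : ℝ}
    (hα : equilibriumMap b α = u₀ + u₁) (hβ : equilibriumMap b β = v₀ + v₁)
    (h₀ : u₀ ≤ v₀) (h₀₁ : v₀ - u₀ ≤ v₁ - u₁) :
    v₁ - u₁ ≤ (equilibriumMap b (2 * v₁ - β) - v₁) - (equilibriumMap b (2 * u₁ - α) - u₁) := by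
  have hαβ : α ≤ β := (equilibriumMap_strictMono hb).le_iff_le.mp (by linarith)
  have hΔ := two_mul_sub_le_equilibriumMap_sub hb hαβ
  have hnext := two_mul_sub_le_equilibriumMap_sub hb
    (show 2 * u₁ - α ≤ 2 * v₁ - β by linarith)
  linarith

lemma IsEquilibriumSeq.sub_le_sub_of_le {L : ℕ} {u v α β : ℕ → ℝ} (hb : 0 ≤ b)
    (hu : IsEquilibriumSeq b L u α) (hv : IsEquilibriumSeq b L v β)
    (h₀ : u 0 ≤ v 0) (h₀₁ : v 0 - u 0 ≤ v 1 - u 1) {n : ℕ} (hn : n < L) :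
    u n ≤ v n ∧ v n - u n ≤ v (n + 1) - u (n + 1) ∧ v 1 - u 1 ≤ v (n + 1) - u (n + 1) := by
  induction n with
  | zero => exact ⟨h₀, h₀₁, le_rfl⟩
  | succ n ih =>
    obtain ⟨hle, hgap, hfirst⟩ := ih (by omega)
    obtain ⟨hα, hu_succ⟩ := hu (n + 1) (by omega) hn
    obtain ⟨hβ, hv_succ⟩ := hv (n + 1) (by omega) hn
    simp only [Nat.add_sub_cancel] at hα hβ
    have hstep := sub_le_sub_equilibriumStep hb hα hβ hle hgap
    rw [← hu_succ, ← hv_succ] at hstep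
    exact ⟨by linarith, hstep, by linarith⟩

lemma IsEquilibriumSeq.sub_le_sub_end {L : ℕ} {u v α β : ℕ → ℝ} (hb : 0 ≤ b) (hL : 1 ≤ L)
    (hu : IsEquilibriumSeq b L u α) (hv : IsEquilibriumSeq b L v β)
    (h₀ : u 0 ≤ v 0) (h₀₁ : v 0 - u 0 ≤ v 1 - u 1) :
    v 1 - u 1 ≤ v L - u L := by
  obtain ⟨n, rfl⟩ : ∃ n, L = n + 1 := ⟨L - 1, by omega⟩
  exact (hu.sub_le_sub_of_le hb hv h₀ h₀₁ (Nat.lt_succ_self n)).2.2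

end

/-- Uniqueness of the `L`-interval equilibrium partition: along the equilibrium
recursion (φ_b(a_m) = s_{m-1} + s_m, s_{m+1} = φ_b(2 s_m − a_m) − s_m) starting
from `s 0 = 0`, `s 1 = t`, the end point `t ↦ s_L(t)` is strictly increasing on
the domain where the sequence is increasing; hence at most one `t` yields `s_L = 1`. -/
theorem stmt_18 (b : ℝ) (hb : 0 < b) (L : ℕ) (hL : 1 ≤ L)
    (D : Set ℝ) (s : ℝ → ℕ → ℝ) (a : ℝ → ℕ → ℝ)
    (h : ∀ t ∈ D, 0 < t ∧ s t 0 = 0 ∧ s t 1 = t ∧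
      (∀ m : ℕ, 1 ≤ m → m < L →
        (2 * a t m + b * Real.exp (a t m) = s t (m - 1) + s t m ∧
         s t (m + 1)
           = 2 * (2 * s t m - a t m) + b * Real.exp (2 * s t m - a t m) - s t m)) ∧
      (∀ m : ℕ, m < L → s t m < s t (m + 1))) :
    StrictMonoOn (fun t => s t L) D ∧
    (∀ t₁ ∈ D, ∀ t₂ ∈ D, s t₁ L = 1 → s t₂ L = 1 → t₁ = t₂) := by
  have hmono : StrictMonoOn (fun t => s t L) D := by
    intro t₁ ht₁ t₂ ht₂ hlt
    obtain ⟨-, hs₁0, hs₁1, hrec₁, -⟩ := h t₁ ht₁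
    obtain ⟨-, hs₂0, hs₂1, hrec₂, -⟩ := h t₂ ht₂
    have hgap := IsEquilibriumSeq.sub_le_sub_end hb.le hL hrec₁ hrec₂
      (by rw [hs₁0, hs₂0]) (by rw [hs₁0, hs₂0, hs₁1, hs₂1]; linarith)
    simp only [hs₁1, hs₂1] at hgap
    show s t₁ L < s t₂ L
    linarith
  refine ⟨hmono, fun t₁ ht₁ t₂ ht₂ h₁ h₂ => hmono.injOn ht₁ ht₂ ?_⟩
  simp only [h₁, h₂]
end
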